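/- Let X = U_X Σ_X V_Xᵀ and Y = U_Y Σ_Y V_Yᵀ be thin SVDs with U_X, U_Y ∈ ℝ^{m×·} having orthonormal columns. Let U_{Y,⊥} := U_Y - U_X U_Xᵀ U_Y with QR decomposition U_{Y,⊥} = QR where Qᵀ U_X = 0 and QᵀQ = I. Define G := [[Σ_X, U_Xᵀ U_Y Σ_Y], [0, R Σ_Y]] with SVD G = U_G Σ_G V_Gᵀ. Then setting U := [U_X Q] U_G, Σ := Σ_G, and V := blockdiag(V_X, V_Y) V_G yields a singular value decomposition of the concatenated matrix [X Y], i.e., [X Y] = UΣVᵀ with UᵀU = I and VᵀV = I. -/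

import Mathlib

/-!
Since `Q R = U_Y - U_X U_Xᵀ U_Y`, the second block column of `[U_X Q] G` is
`U_X U_Xᵀ U_Y Σ_Y + Q R Σ_Y = U_Y Σ_Y`, so `[X Y] = [U_X Q] G blockdiag(V_X, V_Y)ᵀ`; substituting the
SVD of `G` gives the factorization. Orthonormality of columns is preserved by products and by
block-diagonal sums.
-/

open Matrix

namespace Matrix

variable {α : Type*} [CommSemiring α] {l m n o p q r : Type*}

theorem transpose_mul_self_eq_one_mul [Fintype m] [Fintype n] [DecidableEq n] [DecidableEq o]
    {A : Matrix m n α} {B : Matrix n o α} (hA : Aᵀ * A = 1) (hB : Bᵀ * B = 1) :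
    (A * B)ᵀ * (A * B) = 1 := by
  rw [transpose_mul, Matrix.mul_assoc, ← Matrix.mul_assoc Aᵀ, hA, Matrix.one_mul, hB]

theorem fromBlocks_transpose_mul_self_eq_one [Fintype l] [Fintype m]
    [DecidableEq n] [DecidableEq o] {A : Matrix l n α} {B : Matrix m o α}
    (hA : Aᵀ * A = 1) (hB : Bᵀ * B = 1) :
    (fromBlocks A 0 0 B)ᵀ * fromBlocks A 0 0 B = 1 := by
  simp [fromBlocks_transpose, fromBlocks_multiply, hA, hB]

theorem fromCols_mul_fromBlocks_mul_transpose_fromBlocks [Fintype m] [Fintype n]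
    [Fintype o] [Fintype q]
    (A : Matrix l m α) (B : Matrix l n α) (P : Matrix m o α) (S : Matrix m q α)
    (T : Matrix n q α) (V : Matrix p o α) (W : Matrix r q α) :
    fromCols A B * fromBlocks P S 0 T * (fromBlocks V 0 0 W)ᵀ
      = fromCols (A * P * Vᵀ) ((A * S + B * T) * Wᵀ) := by
  simp [fromCols_mul_fromBlocks, fromBlocks_transpose]

end Matrix

theorem stmt8_general (m n1 n2 r1 r2 s : ℕ)
    (X : Matrix (Fin m) (Fin n1) ℝ) (Y : Matrix (Fin m) (Fin n2) ℝ)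
    (UX : Matrix (Fin m) (Fin r1) ℝ) (SX : Fin r1 → ℝ) (VX : Matrix (Fin n1) (Fin r1) ℝ)
    (UY : Matrix (Fin m) (Fin r2) ℝ) (SY : Fin r2 → ℝ) (VY : Matrix (Fin n2) (Fin r2) ℝ)
    (Q : Matrix (Fin m) (Fin r2) ℝ) (R : Matrix (Fin r2) (Fin r2) ℝ)
    (UG : Matrix (Fin r1 ⊕ Fin r2) (Fin s) ℝ) (SG : Fin s → ℝ)
    (VG : Matrix (Fin r1 ⊕ Fin r2) (Fin s) ℝ)
    (hVX : VXᵀ * VX = 1)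
    (hX : X = UX * Matrix.diagonal SX * VXᵀ)
    (hVY : VYᵀ * VY = 1)
    (hY : Y = UY * Matrix.diagonal SY * VYᵀ)
    (hQR : UY - UX * (UXᵀ * UY) = Q * R)
    (hUXQ : (Matrix.fromCols UX Q)ᵀ * Matrix.fromCols UX Q = 1)
    (hUG : UGᵀ * UG = 1) (hVG : VGᵀ * VG = 1)
    (hG : Matrix.fromBlocks (Matrix.diagonal SX) (UXᵀ * UY * Matrix.diagonal SY)
            0 (R * Matrix.diagonal SY)
          = UG * Matrix.diagonal SG * VGᵀ) :
    Matrix.fromCols X Y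
        = (Matrix.fromCols UX Q * UG) * Matrix.diagonal SG
            * ((Matrix.fromBlocks VX 0 0 VY) * VG)ᵀ ∧
      (Matrix.fromCols UX Q * UG)ᵀ * (Matrix.fromCols UX Q * UG) = 1 ∧
      ((Matrix.fromBlocks VX 0 0 VY) * VG)ᵀ * ((Matrix.fromBlocks VX 0 0 VY) * VG) = 1 := by
  have hXY : fromCols X Y = fromCols UX Q
      * fromBlocks (diagonal SX) (UXᵀ * UY * diagonal SY) 0 (R * diagonal SY)
      * (fromBlocks VX 0 0 VY)ᵀ := by
    rw [fromCols_mul_fromBlocks_mul_transpose_fromBlocks, hX, hY, ← Matrix.mul_assoc Q, ← hQR,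
      Matrix.sub_mul, Matrix.mul_assoc UX, Matrix.mul_assoc UX, add_sub_cancel]
  refine ⟨?_, transpose_mul_self_eq_one_mul hUXQ hUG,
    transpose_mul_self_eq_one_mul (fromBlocks_transpose_mul_self_eq_one hVX hVY) hVG⟩
  rw [hXY, hG]
  simp only [transpose_mul, Matrix.mul_assoc]

/-- Correctness of the incremental SVD update (Algorithm 2.1, lines 1–5):
given thin SVDs of `X` and `Y`, the factorization built from the QR
decomposition of the orthogonal complement and the SVD of the small matrix `G`
is an SVD of the horizontal concatenation `[X Y]`. -/
theorem stmt8 (m n1 n2 r1 r2 s : ℕ)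
    (X : Matrix (Fin m) (Fin n1) ℝ) (Y : Matrix (Fin m) (Fin n2) ℝ)
    (UX : Matrix (Fin m) (Fin r1) ℝ) (SX : Fin r1 → ℝ) (VX : Matrix (Fin n1) (Fin r1) ℝ)
    (UY : Matrix (Fin m) (Fin r2) ℝ) (SY : Fin r2 → ℝ) (VY : Matrix (Fin n2) (Fin r2) ℝ)
    (Q : Matrix (Fin m) (Fin r2) ℝ) (R : Matrix (Fin r2) (Fin r2) ℝ)
    (UG : Matrix (Fin r1 ⊕ Fin r2) (Fin s) ℝ) (SG : Fin s → ℝ)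
    (VG : Matrix (Fin r1 ⊕ Fin r2) (Fin s) ℝ)
    (hUX : UXᵀ * UX = 1) (hVX : VXᵀ * VX = 1) (hSX : ∀ i, 0 ≤ SX i)
    (hX : X = UX * Matrix.diagonal SX * VXᵀ)
    (hUY : UYᵀ * UY = 1) (hVY : VYᵀ * VY = 1) (hSY : ∀ i, 0 ≤ SY i)
    (hY : Y = UY * Matrix.diagonal SY * VYᵀ)
    (hQR : UY - UX * (UXᵀ * UY) = Q * R)
    (hQX : Qᵀ * UX = 0) (hQ : Qᵀ * Q = 1)
    (hUXQ : (Matrix.fromCols UX Q)ᵀ * Matrix.fromCols UX Q = 1)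
    (hUG : UGᵀ * UG = 1) (hVG : VGᵀ * VG = 1) (hSG : ∀ i, 0 ≤ SG i)
    (hG : Matrix.fromBlocks (Matrix.diagonal SX) (UXᵀ * UY * Matrix.diagonal SY)
            0 (R * Matrix.diagonal SY)
          = UG * Matrix.diagonal SG * VGᵀ) :
    Matrix.fromCols X Y
        = (Matrix.fromCols UX Q * UG) * Matrix.diagonal SG
            * ((Matrix.fromBlocks VX 0 0 VY) * VG)ᵀ ∧
      (Matrix.fromCols UX Q * UG)ᵀ * (Matrix.fromCols UX Q * UG) = 1 ∧
      ((Matrix.fromBlocks VX 0 0 VY) * VG)ᵀ * ((Matrix.fromBlocks VX 0 0 VY) * VG) = 1 :=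
  stmt8_general m n1 n2 r1 r2 s X Y UX SX VX UY SY VY Q R UG SG VG hVX hX hVY hY hQR hUXQ hUG hVG hG
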